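/- arXiv:1004.1295 — 3 statements merged into one kernel-verified Lean document; each statement's English description precedes it below -/
import Mathlib

section
/- Let c be a nondegenerate conic in ℝP², P1, P2 distinct points on c with tangent intersection point T, and let l be any line through T meeting c in two distinct points P and U and meeting the line P1P2 in a point X. Then the cross ratio cr(U, P, X, T) equals -1. -/
/-- A nondegenerate bilinear form on `ℝ³` admits no 2-dimensional totally
isotropic subspace. -/
lemma no_isotropic_plane (B : (Fin 3 → ℝ) →ₗ[ℝ] (Fin 3 → ℝ) →ₗ[ℝ] ℝ)
    (hnd : ∀ u, (∀ v, B u v = 0) → u = 0)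
    (x t : Fin 3 → ℝ) (hxt : LinearIndependent ℝ ![x, t])
    (hxx : B x x = 0) (hxt0 : B x t = 0) (htx : B t x = 0) (htt : B t t = 0) : False := by
  have hlt : Submodule.span ℝ (Set.range ![x, t]) < ⊤ := by
    apply span_lt_top_of_card_lt_finrank
    have : (Set.range ![x, t]).toFinset.card ≤ 2 := by
      classical
      calc (Set.range ![x, t]).toFinset.card ≤ ({x, t} : Finset _).card := by
            apply Finset.card_le_card
            intro a ha
            simp only [Set.mem_toFinset, Set.mem_range] at ha
            obtain ⟨i, rfl⟩ := ha
            fin_cases i <;> simp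
        _ ≤ 2 := Finset.card_insert_le _ _ |>.trans (by simp)
    have h3 : Module.finrank ℝ (Fin 3 → ℝ) = 3 := by simp
    omega
  obtain ⟨v₀, -, hv₀⟩ := SetLike.exists_of_lt hlt
  have hind3 : LinearIndependent ℝ (Fin.snoc ![x, t] v₀ : Fin 3 → (Fin 3 → ℝ)) :=
    linearIndependent_fin_snoc.mpr ⟨hxt, hv₀⟩
  have h3eq : Fintype.card (Fin 3) = Module.finrank ℝ (Fin 3 → ℝ) := by simp
  let hb := basisOfLinearIndependentOfCardEqFinrank hind3 h3eq
  have hbcoe : ⇑hb = Fin.snoc ![x, t] v₀ :=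
    coe_basisOfLinearIndependentOfCardEqFinrank hind3 h3eq
  have key : ∀ w : Fin 3 → ℝ, B w x = 0 → B w t = 0 → B w v₀ = 0 → w = 0 := by
    intro w h1 h2 h3
    apply hnd
    intro v
    have : B w = 0 := by
      apply hb.ext
      intro i
      rw [hbcoe]
      fin_cases i <;> simpa [Fin.snoc]
    simp [this]
  set a := B x v₀ with ha
  set b := B t v₀ with hbdef
  have hw : b • x - a • t = 0 := by
    apply key
    · simp [LinearMap.map_sub, LinearMap.map_smul, hxx, htx, smul_eq_mul]
    · simp [LinearMap.map_sub, LinearMap.map_smul, hxt0, htt, smul_eq_mul]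
    · simp [LinearMap.map_sub, LinearMap.map_smul, smul_eq_mul, ← ha, ← hbdef]
      ring
  have hab : b = 0 ∧ -a = 0 := by
    apply LinearIndependent.pair_iff.mp hxt
    rw [neg_smul, ← sub_eq_add_neg]
    exact hw
  have hx0 : x = 0 := by
    apply key
    · exact hxx
    · exact hxt0
    · rw [← ha]; simpa using hab.2
  have := LinearIndependent.pair_iff.mp hxt 1 0 (by simp [hx0])
  simp at this

/-- Let `c` be a nondegenerate conic in ℝP² given by a nondegenerate
symmetric bilinear form `B` on ℝ³, let `P1, P2` be distinct points on `c`, and let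
`T = [t]` be the intersection of the tangents at `P1, P2`.  Let `l` be a line through
`T` meeting `c` in two distinct points `P = [p]`, `U = [u]` and meeting the line
`P1 P2` in a point `X = [x]`.  Writing `p = α • x + β • t` and `u = γ • x + δ • t`
(coordinates on the line `l` spanned by `x, t`; the nonvanishing of `α, β, γ, δ`
expresses that `P, U ∉ {X, T}`), the cross ratio `cr(U, P, X, T)`, computed in the
projective coordinate system `{X, T; P}` on `l`, equals `-1`. -/
theorem stmt3 (B : (Fin 3 → ℝ) →ₗ[ℝ] (Fin 3 → ℝ) →ₗ[ℝ] ℝ)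
    (hsymm : ∀ u v, B u v = B v u)
    (hnd : ∀ u, (∀ v, B u v = 0) → u = 0)
    (p1 p2 t x p u : Fin 3 → ℝ) (α β γ δ : ℝ)
    (hind : LinearIndependent ℝ ![p1, p2])
    (hp1 : B p1 p1 = 0) (hp2 : B p2 p2 = 0)
    (ht : t ≠ 0) (ht1 : B p1 t = 0) (ht2 : B p2 t = 0)
    (hx : x ∈ Submodule.span ℝ ({p1, p2} : Set (Fin 3 → ℝ)))
    (hxt : LinearIndependent ℝ ![x, t])
    (hp : p = α • x + β • t) (hu : u = γ • x + δ • t)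
    (hpc : B p p = 0) (huc : B u u = 0)
    (hα : α ≠ 0) (hβ : β ≠ 0) (hγ : γ ≠ 0) (hδ : δ ≠ 0)
    (hpu : ¬ ∃ c : ℝ, u = c • p) :
    (δ / β) / (γ / α) = -1 := by
  -- `t` is orthogonal to the whole line `p1 p2`, in particular to `x`.
  have htx : B t x = 0 := by
    have hle : Submodule.span ℝ ({p1, p2} : Set (Fin 3 → ℝ)) ≤ LinearMap.ker (B t) := by
      rw [Submodule.span_le]
      rintro v (rfl | rfl) <;>
        simp [LinearMap.mem_ker, hsymm t, ht1, ht2]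
    simpa [LinearMap.mem_ker] using hle hx
  have hxt0 : B x t = 0 := by rw [hsymm]; exact htx
  set K := B x x with hK
  set L := B t t with hL
  have hPP : α ^ 2 * K + β ^ 2 * L = 0 := by
    have h := hpc
    rw [hp] at h
    simp only [map_add, map_smul, LinearMap.add_apply, LinearMap.smul_apply, smul_eq_mul,
      ← hK, ← hL, hxt0, htx] at h
    nlinarith [h]
  have hUU : γ ^ 2 * K + δ ^ 2 * L = 0 := by
    have h := huc
    rw [hu] at h
    simp only [map_add, map_smul, LinearMap.add_apply, LinearMap.smul_apply, smul_eq_mul,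
      ← hK, ← hL, hxt0, htx] at h
    nlinarith [h]
  have hKne : K ≠ 0 := by
    intro hK0
    have hL0 : L = 0 := by
      have : β ^ 2 * L = 0 := by rw [hK0] at hPP; linarith
      have hb2 : β ^ 2 ≠ 0 := pow_ne_zero _ hβ
      exact (mul_eq_zero.mp this).resolve_left hb2
    exact no_isotropic_plane B hnd x t hxt hK0 hxt0 htx hL0
  have hsq : (α * δ) ^ 2 = (β * γ) ^ 2 := by
    have h1 : α ^ 2 * K = -(β ^ 2 * L) := by linarith
    have h2 : γ ^ 2 * K = -(δ ^ 2 * L) := by linarith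
    have h3 : ((α * δ) ^ 2 - (β * γ) ^ 2) * K = 0 := by nlinarith [h1, h2]
    have := (mul_eq_zero.mp h3).resolve_right hKne
    linarith
  have hcases : α * δ = β * γ ∨ α * δ = -(β * γ) := sq_eq_sq_iff_eq_or_eq_neg.mp hsq
  rcases hcases with h | h
  · exfalso
    apply hpu
    refine ⟨γ / α, ?_⟩
    rw [hu, hp, smul_add, smul_smul, smul_smul]
    have h1 : γ / α * α = γ := by field_simp
    have h2 : γ / α * β = δ := by field_simp; nlinarith [h]
    rw [h1, h2]
  · field_simp
    nlinarith [h]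
end

section
/- Let p_{i-1}, p_i, p_{i+1}, p_{i+2} be four consecutive points of a strictly convex polygon (so consecutive edges turn in the same rotational direction), and let q_i be the intersection of the lines through p_{i-1}p_i and through p_{i+1}p_{i+2}. If t_i is any point in the open triangle Δ(p_i, q_i, p_{i+1}) and u is any point in the open triangle Δ(p_i, t_i, p_{i+1}), then the refined sequence p_{i-1}, p_i, u, p_{i+1}, p_{i+2} is still strictly convex. -/
/-- Planar determinant `det(v, w)` for `v w : ℝ × ℝ`. -/
def det2 (v w : ℝ × ℝ) : ℝ := v.1 * w.2 - v.2 * w.1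

set_option maxHeartbeats 1600000 in
/-- Let `a = p_{i-1}, b = p_i, c = p_{i+1}, d = p_{i+2}` be four
consecutive points of a strictly convex polygon (consecutive edge vectors turn in the
same rotational direction, here positively oriented), and let `q = q_i` be the
intersection of the lines `p_{i-1} p_i` and `p_{i+1} p_{i+2}`, lying in the standard
convex configuration on the opposite side of the line `p_i p_{i+1}` from `p_{i-1}` and
`p_{i+2}`.  If `t` is any point of the open triangle `Δ(b, q, c)` and `u` is any point
of the open triangle `Δ(b, t, c)`, then the refined sequence `a, b, u, c, d` is still
strictly convex. -/
theorem stmt7 (a b c d q t u : ℝ × ℝ)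
    (h1 : det2 (b - a) (c - b) > 0) (h2 : det2 (c - b) (d - c) > 0)
    (hq1 : ∃ s : ℝ, q = a + s • (b - a)) (hq2 : ∃ s : ℝ, q = d + s • (c - d))
    (hqb : det2 (c - b) (q - b) * det2 (c - b) (a - b) < 0)
    (hqd : det2 (c - b) (q - b) * det2 (c - b) (d - b) < 0)
    (α β γ : ℝ) (hα : 0 < α) (hβ : 0 < β) (hγ : 0 < γ) (hsum : α + β + γ = 1)
    (ht : t = α • b + β • q + γ • c)
    (α' β' γ' : ℝ) (hα' : 0 < α') (hβ' : 0 < β') (hγ' : 0 < γ')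
    (hsum' : α' + β' + γ' = 1) (hu : u = α' • b + β' • t + γ' • c) :
    det2 (b - a) (u - b) > 0 ∧ det2 (u - b) (c - u) > 0 ∧
    det2 (c - u) (d - c) > 0 := by
  obtain ⟨s, hs⟩ := hq1
  obtain ⟨s', hs'⟩ := hq2
  subst ht hu
  obtain ⟨a1,a2⟩ := a; obtain ⟨b1,b2⟩ := b; obtain ⟨c1,c2⟩ := c
  obtain ⟨d1,d2⟩ := d; obtain ⟨q1,q2⟩ := q
  simp only [det2, Prod.ext_iff, Prod.fst_add, Prod.snd_add, Prod.fst_sub, Prod.snd_sub,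
    Prod.smul_fst, Prod.smul_snd, smul_eq_mul] at *
  obtain ⟨e1, e2⟩ := hs
  obtain ⟨e3, e4⟩ := hs'
  have hγe : γ = 1 - α - β := by linarith
  have hγ'e : γ' = 1 - α' - β' := by linarith
  subst hγe hγ'e
  -- key sign fact: det(c-b, q-b) < 0
  have hK : (c1 - b1) * (q2 - b2) - (c2 - b2) * (q1 - b1) < 0 := by
    nlinarith [h1, hqb]
  -- z1 : det(b-a, q-b) = 0
  have z1 : (b1 - a1) * (q2 - b2) - (b2 - a2) * (q1 - b1) = 0 := by
    linear_combination (b1 - a1) * e2 - (b2 - a2) * e1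
  -- z2 : det(c-q, d-c) = 0
  have z2 : (c1 - q1) * (d2 - c2) - (c2 - q2) * (d1 - c1) = 0 := by
    linear_combination (d1 - c1) * e4 - (d2 - c2) * e3
  have hC : 0 < (1 - α' - β') + β' * (1 - α - β) := by nlinarith [mul_pos hβ' hγ]
  have hA : 0 < α' + β' * α := by nlinarith [mul_pos hβ' hα]
  have hB : 0 < β' * β := mul_pos hβ' hβ
  refine ⟨?_, ?_, ?_⟩
  · have z1m : (β' * β) * ((b1 - a1) * (q2 - b2) - (b2 - a2) * (q1 - b1)) = 0 := by
      linear_combination (β' * β) * z1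
    linarith [mul_pos hC h1, z1m]
  · linarith [mul_pos hB (neg_pos.mpr hK)]
  · have z2m : (β' * β) * ((c1 - q1) * (d2 - c2) - (c2 - q2) * (d1 - c1)) = 0 := by
      linear_combination (β' * β) * z2
    linarith [mul_pos hA h2, z2m]
end

section
/- Let Q1, Q2, Q3, Q4, Q5 be five distinct points on a nondegenerate conic c in ℝP². Define M_{ij} = Q_i ∧ Q_j (the line through Q_i and Q_j via cross product of homogeneous coordinates), A = M_{12} ∧ M_{34}, B = M_{54} ∧ M_{32}, and M_{33} = Q_3 ∧ (M_{15} ∧ (A ∧ B)). Then M_{33} is the tangent line to c at Q_3. -/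
open Matrix

private def dt3 (u v w : Fin 3 → ℝ) : ℝ :=
  u 0 * (v 1 * w 2 - v 2 * w 1) - u 1 * (v 0 * w 2 - v 2 * w 0) + u 2 * (v 0 * w 1 - v 1 * w 0)

private lemma dt3_dot (u v w : Fin 3 → ℝ) : u ⬝ᵥ crossProduct v w = dt3 u v w := by
  simp [dotProduct, Fin.sum_univ_three, cross_apply, dt3]; ring

private lemma ccc (u v w z : Fin 3 → ℝ) :
    crossProduct (crossProduct u v) (crossProduct w z) = dt3 u v z • w - dt3 u v w • z := by
  funext i
  fin_cases i <;> simp [cross_apply, dt3] <;> ring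

private lemma ortho_decomp (u v w : Fin 3 → ℝ) :
    ((crossProduct u v) ⬝ᵥ (crossProduct u v)) • w
      = (w ⬝ᵥ crossProduct u v) • crossProduct u v
        + ((w ⬝ᵥ u) * (v ⬝ᵥ v) - (w ⬝ᵥ v) * (v ⬝ᵥ u)) • u
        + ((w ⬝ᵥ v) * (u ⬝ᵥ u) - (w ⬝ᵥ u) * (u ⬝ᵥ v)) • v := by
  funext i
  fin_cases i <;>
    simp [cross_apply, dotProduct, Fin.sum_univ_three, Pi.smul_apply, Pi.add_apply,
      Matrix.cons_val_zero, Matrix.cons_val_one, Matrix.head_cons, Matrix.cons_val_two,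
      Matrix.tail_cons, smul_eq_mul, Matrix.vecHead, Matrix.vecTail, Function.comp] <;> ring

private lemma parallel_of_ortho (u v t : Fin 3 → ℝ) (h1 : t ⬝ᵥ u = 0) (h2 : t ⬝ᵥ v = 0) :
    ((crossProduct u v) ⬝ᵥ (crossProduct u v)) • t
      = (t ⬝ᵥ crossProduct u v) • crossProduct u v := by
  have h := ortho_decomp u v t
  rw [h1, h2] at h
  simpa using h

private lemma vec_decomp (u : Fin 3 → ℝ) :
    u = u 0 • (Pi.single 0 1 : Fin 3 → ℝ) + u 1 • (Pi.single 1 1 : Fin 3 → ℝ) + u 2 • (Pi.single 2 1 : Fin 3 → ℝ) := by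
  funext i
  fin_cases i <;> simp [Pi.single_apply]

private lemma bdot (B₀ : (Fin 3 → ℝ) →ₗ[ℝ] (Fin 3 → ℝ) →ₗ[ℝ] ℝ) (s w : Fin 3 → ℝ) :
    (fun j => B₀ s (Pi.single j 1)) ⬝ᵥ w = B₀ s w := by
  conv_rhs => rw [vec_decomp w]
  simp [dotProduct, Fin.sum_univ_three, map_add, _root_.map_smul, smul_eq_mul]
  ring

private lemma Bfun_ne (B₀ : (Fin 3 → ℝ) →ₗ[ℝ] (Fin 3 → ℝ) →ₗ[ℝ] ℝ)
    (hnd : ∀ u, (∀ v, B₀ u v = 0) → u = 0) (s : Fin 3 → ℝ) (hs : s ≠ 0) :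
    (fun j => B₀ s (Pi.single j 1)) ≠ 0 := by
  intro h
  apply hs
  apply hnd
  intro v
  rw [← bdot B₀ s v, h]
  simp [dotProduct]

private lemma ne_zero_of_pair_li {u v : Fin 3 → ℝ} (h : LinearIndependent ℝ ![u, v]) : u ≠ 0 := by
  obtain ⟨h1, h2⟩ := linearIndependent_fin2.mp h
  intro hu
  exact h2 0 (by simp [hu])

private lemma not_smul_of_pair_li {u v : Fin 3 → ℝ} (h : LinearIndependent ℝ ![u, v]) :
    ∀ s : ℝ, s • v ≠ u :=
  (linearIndependent_fin2.mp h).2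

private lemma Bpair_ne (B₀ : (Fin 3 → ℝ) →ₗ[ℝ] (Fin 3 → ℝ) →ₗ[ℝ] ℝ)
    (hsymm : ∀ u v, B₀ u v = B₀ v u) (hnd : ∀ u, (∀ v, B₀ u v = 0) → u = 0)
    (u v : Fin 3 → ℝ) (hu : B₀ u u = 0) (hv : B₀ v v = 0)
    (hind : LinearIndependent ℝ ![u, v]) : B₀ u v ≠ 0 := by
  intro h0
  set n := crossProduct u v with hn
  have hnne : n ≠ 0 := crossProduct_ne_zero_iff_linearIndependent.mpr hind
  have hnn : n ⬝ᵥ n ≠ 0 := fun h => hnne (dotProduct_self_eq_zero.mp h)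
  set tu : Fin 3 → ℝ := fun j => B₀ u (Pi.single j 1) with htu
  set tv : Fin 3 → ℝ := fun j => B₀ v (Pi.single j 1) with htv
  have h1 : (n ⬝ᵥ n) • tu = (tu ⬝ᵥ n) • n := by
    apply parallel_of_ortho
    · rw [htu, bdot]; exact hu
    · rw [htu, bdot]; exact h0
  have h2 : (n ⬝ᵥ n) • tv = (tv ⬝ᵥ n) • n := by
    apply parallel_of_ortho
    · rw [htv, bdot, hsymm]; exact h0
    · rw [htv, bdot]; exact hv
  have hvu : LinearIndependent ℝ ![v, u] := by
    rw [← crossProduct_ne_zero_iff_linearIndependent, ← cross_anticomm, neg_ne_zero]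
    exact hnne
  have htune : tu ≠ 0 := Bfun_ne B₀ hnd u (ne_zero_of_pair_li hind)
  have htvne : tv ≠ 0 := Bfun_ne B₀ hnd v (ne_zero_of_pair_li hvu)
  have hmu : tu ⬝ᵥ n ≠ 0 := by
    intro h
    rw [h, zero_smul] at h1
    rcases smul_eq_zero.mp h1 with h' | h'
    · exact hnn h'
    · exact htune h'
  have hmv : tv ⬝ᵥ n ≠ 0 := by
    intro h
    rw [h, zero_smul] at h2
    rcases smul_eq_zero.mp h2 with h' | h'
    · exact hnn h'
    · exact htvne h'
  have key : ∀ w, B₀ ((tv ⬝ᵥ n) • u - (tu ⬝ᵥ n) • v) w = 0 := by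
    intro w
    have e1 : B₀ u w = tu ⬝ᵥ w := (bdot B₀ u w).symm
    have e2 : B₀ v w = tv ⬝ᵥ w := (bdot B₀ v w).symm
    have e3 : (n ⬝ᵥ n) * (tu ⬝ᵥ w) = (tu ⬝ᵥ n) * (n ⬝ᵥ w) := by
      have h3 := congrArg (· ⬝ᵥ w) h1
      simpa [smul_dotProduct] using h3
    have e4 : (n ⬝ᵥ n) * (tv ⬝ᵥ w) = (tv ⬝ᵥ n) * (n ⬝ᵥ w) := by
      have h4 := congrArg (· ⬝ᵥ w) h2
      simpa [smul_dotProduct] using h4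
    have e5 : (n ⬝ᵥ n) * ((tv ⬝ᵥ n) * B₀ u w - (tu ⬝ᵥ n) * B₀ v w) = 0 := by
      rw [e1, e2]; ring_nf; linear_combination (tv ⬝ᵥ n) * e3 - (tu ⬝ᵥ n) * e4
    have h5 := (mul_eq_zero.mp e5).resolve_left hnn
    simp only [map_sub, _root_.map_smul, LinearMap.sub_apply, LinearMap.smul_apply,
      smul_eq_mul]
    linarith [h5]
  have h6 : (tv ⬝ᵥ n) • u - (tu ⬝ᵥ n) • v = 0 := hnd _ key
  have h7 : ((tv ⬝ᵥ n)⁻¹ * (tu ⬝ᵥ n)) • v = u := by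
    rw [sub_eq_zero] at h6
    rw [mul_smul, ← h6, ← mul_smul, inv_mul_cancel₀ hmv, one_smul]
  exact not_smul_of_pair_li hind _ h7

private lemma dt3_cyc (u v w : Fin 3 → ℝ) : dt3 u v w = dt3 v w u := by
  unfold dt3; ring

private lemma dt3_swap (u v w : Fin 3 → ℝ) : dt3 u v w = -dt3 u w v := by
  unfold dt3; ring

private lemma triple_ne (B₀ : (Fin 3 → ℝ) →ₗ[ℝ] (Fin 3 → ℝ) →ₗ[ℝ] ℝ)
    (hsymm : ∀ u v, B₀ u v = B₀ v u) (hnd : ∀ u, (∀ v, B₀ u v = 0) → u = 0)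
    (u v w : Fin 3 → ℝ) (hu : B₀ u u = 0) (hv : B₀ v v = 0) (hw : B₀ w w = 0)
    (huv : LinearIndependent ℝ ![u, v]) (hwu : LinearIndependent ℝ ![w, u])
    (hwv : LinearIndependent ℝ ![w, v]) : dt3 u v w ≠ 0 := by
  intro h0
  have hnne : crossProduct u v ≠ 0 := crossProduct_ne_zero_iff_linearIndependent.mpr huv
  have hnn : crossProduct u v ⬝ᵥ crossProduct u v ≠ 0 :=
    fun h => hnne (dotProduct_self_eq_zero.mp h)
  have hwn : w ⬝ᵥ crossProduct u v = 0 := by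
    rw [dt3_dot, dt3_cyc w u v] at *
    exact h0
  have hdec := ortho_decomp u v w
  rw [hwn, zero_smul, zero_add] at hdec
  set α : ℝ := (w ⬝ᵥ u) * (v ⬝ᵥ v) - (w ⬝ᵥ v) * (v ⬝ᵥ u) with hα
  set β : ℝ := (w ⬝ᵥ v) * (u ⬝ᵥ u) - (w ⬝ᵥ u) * (u ⬝ᵥ v) with hβ
  have hBquad := congrArg (fun z => B₀ z z) hdec
  simp only [map_add, _root_.map_smul, LinearMap.add_apply, LinearMap.smul_apply,
    smul_eq_mul] at hBquad
  rw [hu, hv, hw, hsymm v u] at hBquad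
  have hab : α * β = 0 := by
    have hBuv : B₀ u v ≠ 0 := Bpair_ne B₀ hsymm hnd u v hu hv huv
    have h2 : (2 * (α * β)) * B₀ u v = 0 := by linear_combination -hBquad
    rcases mul_eq_zero.mp h2 with h' | h'
    · linarith
    · exact absurd h' hBuv
  rcases mul_eq_zero.mp hab with h' | h'
  · rw [h', zero_smul, zero_add] at hdec
    have hs : ((crossProduct u v ⬝ᵥ crossProduct u v)⁻¹ * β) • v = w := by
      rw [mul_smul, ← hdec, ← mul_smul, inv_mul_cancel₀ hnn, one_smul]
    exact not_smul_of_pair_li hwv _ hs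
  · rw [h', zero_smul, add_zero] at hdec
    have hs : ((crossProduct u v ⬝ᵥ crossProduct u v)⁻¹ * α) • u = w := by
      rw [mul_smul, ← hdec, ← mul_smul, inv_mul_cancel₀ hnn, one_smul]
    exact not_smul_of_pair_li hwu _ hs

private noncomputable def bmat (B₀ : (Fin 3 → ℝ) →ₗ[ℝ] (Fin 3 → ℝ) →ₗ[ℝ] ℝ) :
    Matrix (Fin 3) (Fin 3) ℝ :=
  Matrix.of fun i j => B₀ (Pi.single i 1) (Pi.single j 1)

private lemma bmat_expand (B₀ : (Fin 3 → ℝ) →ₗ[ℝ] (Fin 3 → ℝ) →ₗ[ℝ] ℝ) (u v : Fin 3 → ℝ) :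
    B₀ u v = u ⬝ᵥ (bmat B₀).mulVec v := by
  conv_lhs => rw [vec_decomp u, vec_decomp v]
  simp [map_add, _root_.map_smul, Matrix.mulVec, dotProduct, Fin.sum_univ_three, bmat,
    smul_eq_mul]
  ring

private lemma bmat_det_ne (B₀ : (Fin 3 → ℝ) →ₗ[ℝ] (Fin 3 → ℝ) →ₗ[ℝ] ℝ)
    (hsymm : ∀ u v, B₀ u v = B₀ v u) (hnd : ∀ u, (∀ v, B₀ u v = 0) → u = 0) :
    (bmat B₀).det ≠ 0 := by
  intro h
  obtain ⟨v, hv0, hv⟩ := Matrix.exists_mulVec_eq_zero_iff.mpr h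
  apply hv0
  apply hnd
  intro w
  rw [hsymm, bmat_expand B₀ w v, hv]
  simp [dotProduct]

private lemma det_rows (u v w : Fin 3 → ℝ) : (Matrix.of ![u, v, w]).det = dt3 u v w := by
  rw [Matrix.det_fin_three]
  simp [dt3, Matrix.of_apply, Matrix.cons_val_zero, Matrix.cons_val_one, Matrix.head_cons]
  ring

private lemma MG (B₀ : (Fin 3 → ℝ) →ₗ[ℝ] (Fin 3 → ℝ) →ₗ[ℝ] ℝ)
    (hsymm : ∀ u v, B₀ u v = B₀ v u)
    (x y z w : Fin 3 → ℝ) (hx : B₀ x x = 0) (hy : B₀ y y = 0) :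
    dt3 x y z * dt3 x y w * (bmat B₀).det
      = B₀ x y * (B₀ x z * B₀ y w + B₀ x w * B₀ y z - B₀ x y * B₀ z w) := by
  have h1 : Matrix.of ![x, y, z] * bmat B₀ * (Matrix.of ![x, y, w])ᵀ
      = Matrix.of fun i j => (![x, y, z] i) ⬝ᵥ (bmat B₀).mulVec (![x, y, w] j) := by
    ext i j
    fin_cases i <;> fin_cases j <;>
      · simp [Matrix.mul_apply, Fin.sum_univ_three, Matrix.transpose_apply,
          Matrix.mulVec, Matrix.vecMul, dotProduct, Matrix.vecHead, Matrix.vecTail,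
          Function.comp]
        ring
  have h2 := congrArg Matrix.det h1
  rw [Matrix.det_mul, Matrix.det_mul, Matrix.det_transpose, det_rows, det_rows] at h2
  nth_rewrite 2 [Matrix.det_fin_three] at h2
  simp only [Matrix.of_apply, Matrix.cons_val_zero, Matrix.cons_val_one, Matrix.head_cons,
    Matrix.cons_val_two, Matrix.tail_cons] at h2
  rw [← bmat_expand B₀ x x, ← bmat_expand B₀ x y, ← bmat_expand B₀ x w,
    ← bmat_expand B₀ y x, ← bmat_expand B₀ y y, ← bmat_expand B₀ y w,
    ← bmat_expand B₀ z x, ← bmat_expand B₀ z y, ← bmat_expand B₀ z w] at h2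
  rw [hx, hy, hsymm y x, hsymm z x, hsymm z y] at h2
  linear_combination h2

private lemma dt3_ecb (u v w : Fin 3 → ℝ) : dt3 u v w = -dt3 v u w := by
  unfold dt3; ring


/-- Let `Q1, …, Q5` be five distinct points (pairwise linearly
independent nonzero homogeneous triples `q i`) on a nondegenerate conic `c` of ℝP²
given by a nondegenerate symmetric bilinear form `B₀` on ℝ³.  With `∧` the cross
product (join of points / meet of lines), define `M ij = q i ×₃ q j`,
`A = M12 ×₃ M34`, `Bpt = M54 ×₃ M32` and
`M33 = q 3 ×₃ (M15 ×₃ (A ×₃ Bpt))`.  Then `M33` is (a homogeneous representative of)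
the tangent line to `c` at `Q3`: a point `[x]` is incident with `M33` iff
`B₀ (q 3) x = 0`. -/
theorem stmt15 (B₀ : (Fin 3 → ℝ) →ₗ[ℝ] (Fin 3 → ℝ) →ₗ[ℝ] ℝ)
    (hsymm : ∀ u v, B₀ u v = B₀ v u)
    (hnd : ∀ u, (∀ v, B₀ u v = 0) → u = 0)
    (q : Fin 5 → Fin 3 → ℝ)
    (hconic : ∀ i, B₀ (q i) (q i) = 0)
    (hdist : ∀ i j, i ≠ j → LinearIndependent ℝ ![q i, q j]) :
    ∀ x : Fin 3 → ℝ,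
      (crossProduct (q 2)
          (crossProduct (crossProduct (q 0) (q 4))
            (crossProduct
              (crossProduct (crossProduct (q 0) (q 1)) (crossProduct (q 2) (q 3)))
              (crossProduct (crossProduct (q 4) (q 3)) (crossProduct (q 2) (q 1)))))
          ⬝ᵥ x = 0) ↔ B₀ (q 2) x = 0 := by
  intro x
  have haa := hconic 0
  have hbb := hconic 1
  have hcc := hconic 2
  have hdd := hconic 3
  have hee := hconic 4
  have h01 := hdist 0 1 (by decide)
  have h03 := hdist 0 3 (by decide)
  have h04 := hdist 0 4 (by decide)
  have h12 := hdist 1 2 (by decide)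
  have h20 := hdist 2 0 (by decide)
  have h23 := hdist 2 3 (by decide)
  have h24 := hdist 2 4 (by decide)
  have h31 := hdist 3 1 (by decide)
  have h32 := hdist 3 2 (by decide)
  have h40 := hdist 4 0 (by decide)
  have h41 := hdist 4 1 (by decide)
  have h43 := hdist 4 3 (by decide)
  set a := q 0 with ha
  set b := q 1 with hb
  set c := q 2 with hc
  set d := q 3 with hd
  set e := q 4 with he
  set P := crossProduct (crossProduct a e)
      (crossProduct
        (crossProduct (crossProduct a b) (crossProduct c d))
        (crossProduct (crossProduct e d) (crossProduct c b))) with hPdef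
  -- decomposition of P
  have hP : P = (dt3 a b c * dt3 e d b * dt3 a e d - dt3 a b d * dt3 e d c * dt3 a e b) • c
      + (dt3 e d c * (dt3 a b e * dt3 a d c)) • b
      + (-(dt3 a b c * (dt3 e d a * dt3 e c b))) • d := by
    rw [hPdef, ccc a b c d, ccc e d c b]
    simp only [map_sub, _root_.map_smul, LinearMap.sub_apply, LinearMap.smul_apply,
      map_add, LinearMap.add_apply, cross_self, smul_zero, map_zero, sub_zero, zero_sub,
      add_zero, zero_add, neg_zero, map_neg, LinearMap.neg_apply, smul_neg, neg_smul]
    rw [ccc a e c b, ccc a e d c, ccc a e d b]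
    match_scalars <;> (unfold dt3; ring)
  have hBcP : B₀ c P = (dt3 e d c * (dt3 a b e * dt3 a d c)) * B₀ c b
      + (-(dt3 a b c * (dt3 e d a * dt3 e c b))) * B₀ c d := by
    rw [hP]
    simp only [map_add, _root_.map_smul, smul_eq_mul, hcc]
    ring
  -- the conic identity
  have hdet := bmat_det_ne B₀ hsymm hnd
  have hae : B₀ a e ≠ 0 := Bpair_ne B₀ hsymm hnd a e haa hee h04
  have hMG1 := MG B₀ hsymm d c e a hdd hcc
  have hMG2 := MG B₀ hsymm b c a e hbb hcc
  have hMG3 := MG B₀ hsymm a e c d haa hee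
  have hMG4 := MG B₀ hsymm a e c b haa hee
  rw [hsymm d c, hsymm c a, hsymm e a, hsymm d a] at hMG1
  rw [hsymm b a, hsymm c a] at hMG2
  rw [hsymm e d, hsymm e c] at hMG3
  rw [hsymm e b, hsymm e c, hsymm c b] at hMG4
  have hF : (dt3 e d c * (dt3 a b e * dt3 a d c)) * B₀ c b
      + (-(dt3 a b c * (dt3 e d a * dt3 e c b))) * B₀ c d = 0 := by
    rw [hsymm c b, dt3_cyc e d c, dt3_cyc a d c, dt3_swap a b e, dt3_cyc a b c,
      show dt3 e c b = -dt3 b c e from by unfold dt3; ring,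
      show dt3 e d a = dt3 a e d from by unfold dt3; ring]
    have hnz : (bmat B₀).det * (bmat B₀).det * B₀ a e ≠ 0 :=
      mul_ne_zero (mul_ne_zero hdet hdet) hae
    have hbig : ((dt3 d c e * (-dt3 a e b * dt3 d c a)) * B₀ b c
        + (-(dt3 b c a * (dt3 a e d * -dt3 b c e))) * B₀ c d)
        * ((bmat B₀).det * (bmat B₀).det * B₀ a e) = 0 := by
      linear_combination (-(dt3 a e b * B₀ b c * (bmat B₀).det * B₀ a e)) * hMG1
        + (dt3 a e d * B₀ c d * (bmat B₀).det * B₀ a e) * hMG2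
        + (B₀ b c * B₀ c d * dt3 a e b * (bmat B₀).det) * hMG3
        + (-(B₀ b c * B₀ c d * dt3 a e d * (bmat B₀).det)) * hMG4
    have hres := (mul_eq_zero.mp hbig).resolve_right hnz
    linear_combination hres
  have hBcP0 : B₀ c P = 0 := by rw [hBcP]; exact hF
  -- linear independence of c and P
  have hY : dt3 e d c * (dt3 a b e * dt3 a d c) ≠ 0 :=
    mul_ne_zero (triple_ne B₀ hsymm hnd e d c hee hdd hcc h43 h24 h23)
      (mul_ne_zero (triple_ne B₀ hsymm hnd a b e haa hbb hee h01 h40 h41)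
        (triple_ne B₀ hsymm hnd a d c haa hdd hcc h03 h20 h23))
  have hbcd : dt3 b c d ≠ 0 := triple_ne B₀ hsymm hnd b c d hbb hcc hdd h12 h31 h32
  have hPdot : P ⬝ᵥ crossProduct c d
      = (dt3 e d c * (dt3 a b e * dt3 a d c)) * dt3 b c d := by
    rw [hP]
    simp only [add_dotProduct, smul_dotProduct, smul_eq_mul,
      dot_self_cross, dot_cross_self, dt3_dot, mul_zero, zero_add, add_zero]
  have hPne : P ≠ 0 := by
    intro h
    rw [h, zero_dotProduct] at hPdot
    exact mul_ne_zero hY hbcd hPdot.symm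
  have hcne : c ≠ 0 := ne_zero_of_pair_li h23
  have hli : LinearIndependent ℝ ![c, P] := by
    rw [linearIndependent_fin2]
    refine ⟨by simpa using hPne, fun s hs => ?_⟩
    simp only [Matrix.cons_val_one, Matrix.head_cons, Matrix.cons_val_zero] at hs
    apply hcne
    have hdotc := congrArg (· ⬝ᵥ crossProduct c d) hs
    simp only [smul_dotProduct, smul_eq_mul, hPdot, dot_self_cross] at hdotc
    have hs0 : s = 0 := by
      rcases mul_eq_zero.mp hdotc with h' | h'
      · exact h'
      · exact absurd h' (mul_ne_zero hY hbcd)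
    rw [hs0, zero_smul] at hs
    exact hs.symm
  -- conclusion
  have hNne : crossProduct c P ≠ 0 := crossProduct_ne_zero_iff_linearIndependent.mpr hli
  have hNnn : crossProduct c P ⬝ᵥ crossProduct c P ≠ 0 :=
    fun h => hNne (dotProduct_self_eq_zero.mp h)
  have hpar : (crossProduct c P ⬝ᵥ crossProduct c P) • (fun j => B₀ c (Pi.single j 1))
      = ((fun j => B₀ c (Pi.single j 1)) ⬝ᵥ crossProduct c P) • crossProduct c P := by
    apply parallel_of_ortho
    · rw [bdot]; exact hcc
    · rw [bdot]; exact hBcP0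
  have htne : (fun j => B₀ c (Pi.single j 1)) ≠ 0 := Bfun_ne B₀ hnd c hcne
  have hκ : (fun j => B₀ c (Pi.single j 1)) ⬝ᵥ crossProduct c P ≠ 0 := by
    intro h
    rw [h, zero_smul] at hpar
    rcases smul_eq_zero.mp hpar with h' | h'
    · exact hNnn h'
    · exact htne h'
  have hxeq : (crossProduct c P ⬝ᵥ crossProduct c P) * B₀ c x
      = ((fun j => B₀ c (Pi.single j 1)) ⬝ᵥ crossProduct c P) * (crossProduct c P ⬝ᵥ x) := by
    have h := congrArg (· ⬝ᵥ x) hpar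
    simp only [smul_dotProduct, smul_eq_mul] at h
    rw [bdot B₀ c x] at h
    exact h
  constructor
  · intro h
    rw [h, mul_zero] at hxeq
    rcases mul_eq_zero.mp hxeq with h' | h'
    · exact absurd h' hNnn
    · exact h'
  · intro h
    rw [h, mul_zero] at hxeq
    rcases mul_eq_zero.mp hxeq.symm with h' | h'
    · exact absurd h' hκ
    · exact h'
end
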